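/- arXiv:2408.06977 — 2 statements merged into one kernel-verified Lean document; each statement's English description precedes it below -/
import Mathlib

section
/- Let Z be a real random variable with nondegenerate distribution such that Z and Z² are not almost surely affinely related (e.g., Z standard normal). Let V be independent of Z with positive variance, D = Z² + V, and η = V. Then the only vector (c₀, c₁, c₂, c₃) with c₀ + c₁Z + c₂D + c₃η = 0 almost surely is the zero vector. -/
open MeasureTheory ProbabilityTheory

/-!
After substituting `D = Z² + V` and `η = V`, the relation reads
`c₀ + c₁ Z + c₂ Z² = -(c₂ + c₃) V` a.s. The left side is a function of `Z`, hence independent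
of `V`, so its covariance with `V`, which is `-(c₂ + c₃) Var V`, vanishes; as `Var V > 0` this
forces `c₂ + c₃ = 0`. What remains is an a.s. quadratic relation in `Z`, which is excluded
unless `c₀ = c₁ = c₂ = 0`.
-/

lemma eq_zero_of_indepFun_of_ae_eq_const_mul {Ω : Type*} [MeasurableSpace Ω] {μ : Measure Ω}
    {Y V : Ω → ℝ} {a : ℝ} (hYV : IndepFun Y V μ) (hV : MemLp V 2 μ) (hvar : variance V μ ≠ 0)
    (hY : Y =ᵐ[μ] fun ω => a * V ω) : a = 0 := by
  have hcov : cov[fun ω => a * V ω, V; μ] = 0 :=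
    (hYV.congr hY .rfl).covariance_eq_zero (hV.const_mul a) hV
  rw [covariance_const_mul_left, covariance_self hV.aemeasurable] at hcov
  exact (mul_eq_zero.mp hcov).resolve_right hvar

theorem nonlinear_first_stage_identification_general
    {Ω : Type*} [MeasurableSpace Ω] (μ : Measure Ω)
    (Z V : Ω → ℝ)
    (hindep : IndepFun Z V μ)
    (hvar : 0 < variance V μ) (hV2 : MemLp V 2 μ)
    (hnoaffine : ¬ ∃ p q r : ℝ, (p, q, r) ≠ (0, 0, 0) ∧
      ∀ᵐ ω ∂μ, p + q * Z ω + r * (Z ω) ^ 2 = 0)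
    (D η : Ω → ℝ)
    (hD : ∀ ω, D ω = (Z ω) ^ 2 + V ω) (hη : ∀ ω, η ω = V ω) :
    ∀ c₀ c₁ c₂ c₃ : ℝ,
      (∀ᵐ ω ∂μ, c₀ + c₁ * Z ω + c₂ * D ω + c₃ * η ω = 0) →
      c₀ = 0 ∧ c₁ = 0 ∧ c₂ = 0 ∧ c₃ = 0 := by
  intro c₀ c₁ c₂ c₃ h
  let q : ℝ → ℝ := fun z => c₀ + c₁ * z + c₂ * z ^ 2
  have hqV : IndepFun (q ∘ Z) V μ := hindep.comp (by fun_prop : Measurable q) measurable_id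
  have hq : q ∘ Z =ᵐ[μ] fun ω => -(c₂ + c₃) * V ω := by
    filter_upwards [h] with ω hω
    rw [hD, hη] at hω
    show c₀ + c₁ * Z ω + c₂ * Z ω ^ 2 = -(c₂ + c₃) * V ω
    linear_combination hω
  have hsum : c₂ + c₃ = 0 := neg_eq_zero.mp <|
    eq_zero_of_indepFun_of_ae_eq_const_mul hqV hV2 hvar.ne' hq
  have hpoly : ∀ᵐ ω ∂μ, c₀ + c₁ * Z ω + c₂ * (Z ω) ^ 2 = 0 :=
    hq.mono fun ω hω => by simpa [q, hsum] using hω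
  have hcoeffs : (c₀, c₁, c₂) = (0, 0, 0) := by
    by_contra hne
    exact hnoaffine ⟨c₀, c₁, c₂, hne, hpoly⟩
  simp only [Prod.mk.injEq] at hcoeffs
  obtain ⟨rfl, rfl, rfl⟩ := hcoeffs
  exact ⟨rfl, rfl, rfl, by linarith⟩

/-- If the first stage is nonlinear, `D = Z² + V` with `η = V`, `Z` not a.s. affinely related
to `Z²`, `V` independent of `Z` with positive variance, then `(1, Z, D, η)` are linearly
independent: only the zero vector gives an a.s. vanishing linear combination. -/
theorem nonlinear_first_stage_identification
    {Ω : Type*} [MeasurableSpace Ω] (μ : Measure Ω) [IsProbabilityMeasure μ]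
    (Z V : Ω → ℝ) (hZ : Measurable Z) (hVmeas : Measurable V)
    (hindep : IndepFun Z V μ)
    (hvar : 0 < variance V μ) (hV2 : MemLp V 2 μ) (hZ4 : MemLp Z 4 μ)
    (hnoaffine : ¬ ∃ p q r : ℝ, (p, q, r) ≠ (0, 0, 0) ∧
      ∀ᵐ ω ∂μ, p + q * Z ω + r * (Z ω) ^ 2 = 0)
    (D η : Ω → ℝ)
    (hD : ∀ ω, D ω = (Z ω) ^ 2 + V ω) (hη : ∀ ω, η ω = V ω) :
    ∀ c₀ c₁ c₂ c₃ : ℝ,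
      (∀ᵐ ω ∂μ, c₀ + c₁ * Z ω + c₂ * D ω + c₃ * η ω = 0) →
      c₀ = 0 ∧ c₁ = 0 ∧ c₂ = 0 ∧ c₃ = 0 :=
  nonlinear_first_stage_identification_general μ Z V hindep hvar hV2 hnoaffine D η hD hη
end

section
/- For y ∈ {0,1}, the probit log-likelihood contribution ℓ(t) = y·log Φ(t) + (1-y)·log(1 - Φ(t)) is strictly concave in t, where Φ is the standard normal cdf. -/
/-!
With `φ' = -tφ`, the derivative of `log Φ` is `φ / Φ` and its second derivative is
`-φ (tΦ + φ) / Φ²`. The function `g = tΦ + φ` satisfies `g' = Φ > 0`, and `g ≥ 0` since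
`g(t) = ∫_{-∞}^t (t - x) φ(x) dx`; hence `g > 0` and `log Φ` is strictly concave.
The case `y = 0` reduces to `y = 1` by the symmetry `1 - Φ(t) = Φ(-t)`.
-/

open MeasureTheory ProbabilityTheory Real Set Filter
open scoped NNReal

theorem StrictConcaveOn.comp_neg {𝕜 E β : Type*} [Field 𝕜] [LinearOrder 𝕜] [IsStrictOrderedRing 𝕜]
    [AddCommGroup E] [Module 𝕜 E] [AddCommMonoid β] [PartialOrder β] [SMul 𝕜 β]
    {s : Set E} {f : E → β} (hf : StrictConcaveOn 𝕜 s f) :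
    StrictConcaveOn 𝕜 (-s) (fun x => f (-x)) := by
  refine ⟨hf.1.neg, fun x hx y hy hxy a b ha hb hab => ?_⟩
  simpa only [smul_neg, neg_add] using hf.2 hx hy (neg_injective.ne hxy) ha hb hab

lemma one_sub_cdf_eq_cdf_neg {μ : Measure ℝ} [IsProbabilityMeasure μ] [NullSingletonClass μ]
    (hμ : μ.map (fun x => -x) = μ) (t : ℝ) : 1 - cdf μ t = cdf μ (-t) := by
  rw [cdf_eq_real, cdf_eq_real, ← probReal_compl_eq_one_sub measurableSet_Iic, compl_Iic,
    ← measureReal_congr Iio_ae_eq_Iic]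
  conv_lhs => rw [← hμ]
  rw [map_measureReal_apply measurable_neg measurableSet_Ioi]
  simp

lemma hasDerivAt_gaussianPDFReal (μ : ℝ) (v : ℝ≥0) (x : ℝ) :
    HasDerivAt (gaussianPDFReal μ v) (-((x - μ) / v) * gaussianPDFReal μ v x) x := by
  have h : HasDerivAt (fun y => -(y - μ) ^ 2 / (2 * (v : ℝ))) (-(2 * (x - μ)) / (2 * v)) x := by
    simpa using (((hasDerivAt_id x).sub_const μ).pow 2).neg.div_const (2 * (v : ℝ))
  exact (h.exp.const_mul _).congr_deriv (by rw [gaussianPDFReal]; ring)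

lemma continuous_gaussianPDFReal (μ : ℝ) (v : ℝ≥0) : Continuous (gaussianPDFReal μ v) := by
  unfold gaussianPDFReal; fun_prop

lemma cdf_gaussianReal_eq_integral (μ : ℝ) {v : ℝ≥0} (hv : v ≠ 0) (t : ℝ) :
    cdf (gaussianReal μ v) t = ∫ x in Iic t, gaussianPDFReal μ v x := by
  rw [cdf_eq_real, measureReal_def, gaussianReal_apply_eq_integral μ hv, ENNReal.toReal_ofReal
    (setIntegral_nonneg measurableSet_Iic fun x _ => gaussianPDFReal_nonneg μ v x)]

lemma hasDerivAt_cdf_gaussianReal (μ : ℝ) {v : ℝ≥0} (hv : v ≠ 0) (t : ℝ) :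
    HasDerivAt (cdf (gaussianReal μ v)) (gaussianPDFReal μ v t) t := by
  have hint (a : ℝ) : IntegrableOn (gaussianPDFReal μ v) (Iic a) :=
    (integrable_gaussianPDFReal μ v).integrableOn
  have h (u : ℝ) : cdf (gaussianReal μ v) u =
      cdf (gaussianReal μ v) 0 + ∫ x in (0)..u, gaussianPDFReal μ v x := by
    rw [cdf_gaussianReal_eq_integral μ hv, cdf_gaussianReal_eq_integral μ hv,
      ← intervalIntegral.integral_Iic_sub_Iic (hint _) (hint _), add_sub_cancel]
  refine HasDerivAt.congr_of_eventuallyEq ?_ (Eventually.of_forall h)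
  exact (intervalIntegral.integral_hasDerivAt_right
    (integrable_gaussianPDFReal μ v).intervalIntegrable
    ((continuous_gaussianPDFReal μ v).stronglyMeasurableAtFilter _ _)
    (continuous_gaussianPDFReal μ v).continuousAt).const_add _

lemma cdf_gaussianReal_pos (μ : ℝ) {v : ℝ≥0} (hv : v ≠ 0) (t : ℝ) :
    0 < cdf (gaussianReal μ v) t := by
  have hmono : StrictMono (cdf (gaussianReal μ v)) := strictMono_of_deriv_pos fun x => by
    rw [(hasDerivAt_cdf_gaussianReal μ hv x).deriv]
    exact gaussianPDFReal_pos μ v x hv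
  exact (cdf_nonneg _ (t - 1)).trans_lt (hmono (sub_one_lt t))

lemma one_sub_cdf_gaussianReal {v : ℝ≥0} (hv : v ≠ 0) (t : ℝ) :
    1 - cdf (gaussianReal 0 v) t = cdf (gaussianReal 0 v) (-t) :=
  have := nullSingletonClass_gaussianReal (μ := 0) hv
  one_sub_cdf_eq_cdf_neg (by simpa using gaussianReal_map_neg (μ := 0) (v := v)) t

lemma hasDerivAt_gaussianPDFReal_zero_one (x : ℝ) :
    HasDerivAt (gaussianPDFReal 0 1) (-x * gaussianPDFReal 0 1 x) x := by
  simpa using hasDerivAt_gaussianPDFReal 0 1 x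

lemma integrable_mul_gaussianPDFReal_zero_one :
    Integrable (fun x => x * gaussianPDFReal 0 1 x) := by
  refine ((integrable_mul_exp_neg_mul_sq (b := 1 / 2) (by norm_num)).const_mul
    (√(2 * π))⁻¹).congr (Eventually.of_forall fun x => ?_)
  simp only [gaussianPDFReal]
  push_cast
  ring_nf

lemma integral_Iic_mul_gaussianPDFReal_zero_one (t : ℝ) :
    ∫ x in Iic t, x * gaussianPDFReal 0 1 x = -gaussianPDFReal 0 1 t := by
  have hderiv (x : ℝ) (_ : x ∈ Iic t) := hasDerivAt_gaussianPDFReal_zero_one x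
  have hint : IntegrableOn (fun x => -x * gaussianPDFReal 0 1 x) (Iic t) := by
    simpa using integrable_mul_gaussianPDFReal_zero_one.neg.integrableOn
  have hlim := tendsto_zero_of_hasDerivAt_of_integrableOn_Iic hderiv hint
    (integrable_gaussianPDFReal 0 1).integrableOn
  have := integral_Iic_of_hasDerivAt_of_tendsto' hderiv hint hlim
  simp only [neg_mul, integral_neg, sub_zero] at this
  linarith

lemma mul_cdf_add_gaussianPDFReal_nonneg (t : ℝ) :
    0 ≤ t * cdf (gaussianReal 0 1) t + gaussianPDFReal 0 1 t := by
  have hle : ∫ x in Iic t, x * gaussianPDFReal 0 1 x ≤ ∫ x in Iic t, t * gaussianPDFReal 0 1 x :=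
    setIntegral_mono_on integrable_mul_gaussianPDFReal_zero_one.integrableOn
      ((integrable_gaussianPDFReal 0 1).const_mul t).integrableOn measurableSet_Iic
      fun x hx => mul_le_mul_of_nonneg_right hx (gaussianPDFReal_nonneg 0 1 x)
  rw [integral_Iic_mul_gaussianPDFReal_zero_one, integral_const_mul,
    ← cdf_gaussianReal_eq_integral 0 one_ne_zero] at hle
  linarith

lemma hasDerivAt_mul_cdf_add_gaussianPDFReal (t : ℝ) :
    HasDerivAt (fun s => s * cdf (gaussianReal 0 1) s + gaussianPDFReal 0 1 s)
      (cdf (gaussianReal 0 1) t) t := by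
  have h := ((hasDerivAt_id t).mul (hasDerivAt_cdf_gaussianReal 0 one_ne_zero t)).add
    (hasDerivAt_gaussianPDFReal_zero_one t)
  exact h.congr_deriv (by simp only [id]; ring)

lemma mul_cdf_add_gaussianPDFReal_pos (t : ℝ) :
    0 < t * cdf (gaussianReal 0 1) t + gaussianPDFReal 0 1 t := by
  have hmono : StrictMono fun s => s * cdf (gaussianReal 0 1) s + gaussianPDFReal 0 1 s :=
    strictMono_of_deriv_pos fun x => by
      rw [(hasDerivAt_mul_cdf_add_gaussianPDFReal x).deriv]
      exact cdf_gaussianReal_pos 0 one_ne_zero x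
  exact (mul_cdf_add_gaussianPDFReal_nonneg (t - 1)).trans_lt (hmono (sub_one_lt t))

theorem strictConcaveOn_log_cdf_gaussianReal :
    StrictConcaveOn ℝ univ fun t => log (cdf (gaussianReal 0 1) t) := by
  have hΦ' (t : ℝ) := hasDerivAt_cdf_gaussianReal 0 one_ne_zero t
  have hΦ (t : ℝ) : 0 < cdf (gaussianReal 0 1) t := cdf_gaussianReal_pos 0 one_ne_zero t
  have hcont : Continuous (cdf (gaussianReal 0 1)) :=
    continuous_iff_continuousAt.2 fun t => (hΦ' t).continuousAt
  have hderiv : deriv (fun t => log (cdf (gaussianReal 0 1) t)) =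
      gaussianPDFReal 0 1 / cdf (gaussianReal 0 1) :=
    funext fun t => ((hΦ' t).log (hΦ t).ne').deriv
  refine strictConcaveOn_univ_of_deriv2_neg (hcont.log fun t => (hΦ t).ne') fun t => ?_
  rw [Function.iterate_succ_apply, Function.iterate_one, hderiv,
    ((hasDerivAt_gaussianPDFReal_zero_one t).div (hΦ' t) (hΦ t).ne').deriv]
  have := mul_pos (gaussianPDFReal_pos 0 1 t one_ne_zero) (mul_cdf_add_gaussianPDFReal_pos t)
  exact div_neg_of_neg_of_pos (by linarith) (pow_pos (hΦ t) 2)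

/-- For `y ∈ {0,1}`, the probit log-likelihood contribution
`ℓ(t) = y log Φ(t) + (1-y) log(1 - Φ(t))` is strictly concave in `t`, where `Φ` is the
standard normal cdf. -/
theorem probit_loglik_strictConcave
    (Φ : ℝ → ℝ) (hΦ : ∀ t, Φ t = cdf (gaussianReal 0 1) t)
    (y : ℝ) (hy : y = 0 ∨ y = 1)
    (ℓ : ℝ → ℝ)
    (hℓ : ∀ t, ℓ t = y * Real.log (Φ t) + (1 - y) * Real.log (1 - Φ t)) :
    StrictConcaveOn ℝ Set.univ ℓ := by
  obtain rfl : Φ = cdf (gaussianReal 0 1) := funext hΦ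
  rcases hy with rfl | rfl
  · have : ℓ = fun t => log (cdf (gaussianReal 0 1) (-t)) := funext fun t => by
      rw [hℓ, one_sub_cdf_gaussianReal one_ne_zero]; ring
    simpa [this] using strictConcaveOn_log_cdf_gaussianReal.comp_neg
  · have : ℓ = fun t => log (cdf (gaussianReal 0 1) t) := funext fun t => by
      rw [hℓ]; ring
    exact this ▸ strictConcaveOn_log_cdf_gaussianReal
end
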